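/- arXiv:1305.4025 — 4 statements merged into one kernel-verified Lean document; each statement's English description precedes it below -/
import Mathlib

section
/- The metric space T²_{1,2}(ℕ) = {{1},{2}} ∪ {{1,n} : n ≥ 3} ∪ {{2,m} : m ≥ 3}, with the symmetric difference metric, does not admit a bi-Lipschitz embedding into c₀ with distortion strictly less than 2. Precisely, there is no map f : T²_{1,2}(ℕ) → c₀ and constant C < 2 such that d(σ,τ) ≤ ‖f(σ) − f(τ)‖_∞ ≤ C·d(σ,τ) for all σ, τ. -/
/-!
Write `u = f {1}`, `v = f {2}`, `xₙ = f {1, n}` and `yₘ = f {2, m}`, and let `ε = 2 - C`.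
Beyond some coordinate `N` both `u` and `v` are below `ε / 2`, so there
`|xₙ - yₘ| ≤ |xₙ - u| + |u| + |v| + |v - yₘ| ≤ 2C + ε`.
On the first `N` coordinates the `xₙ` stay within `C` of `u`, so by Bolzano–Weierstrass
two of them, `xₙ` and `xₘ` with `n ≠ m`, are `ε`-close there, and
`|xₙ - yₘ| ≤ |xₙ - xₘ| + |xₘ - yₘ| ≤ ε + 2C`.
Hence `4 = d({1, n}, {2, m}) ≤ ‖xₙ - yₘ‖_∞ ≤ 2C + ε = 2 + C < 4`.
-/

open Filter Finset

/-- The subset `T²_{1,2}(ℕ) = {{1},{2}} ∪ {{1,n} : n ≥ 3} ∪ {{2,m} : m ≥ 3}` of the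
countably branching tree of height 2, with the symmetric difference metric. -/
def T12 : Set (Finset ℕ) :=
  {({1} : Finset ℕ), ({2} : Finset ℕ)} ∪
    {σ | ∃ n ≥ 3, σ = ({1, n} : Finset ℕ)} ∪ {σ | ∃ m ≥ 3, σ = ({2, m} : Finset ℕ)}

section Combinatorics

variable {α : Type*} [DecidableEq α] {a b c d : α}

theorem Finset.card_symmDiff_pair_singleton (hab : a ≠ b) : #(symmDiff {a, b} {a}) = 1 := by
  rw [card_eq_one]
  exact ⟨b, by ext; simp [mem_symmDiff]; grind⟩

theorem Finset.card_symmDiff_pair_pair_right (hab : a ≠ b) (hac : a ≠ c) (hbc : b ≠ c) :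
    #(symmDiff {a, c} {b, c}) = 2 := by
  rw [card_eq_two]
  exact ⟨a, b, hab, by ext; simp [mem_symmDiff]; grind⟩

theorem Finset.card_symmDiff_pair_pair_of_disjoint (hac : a ≠ c) (hbd : b ≠ d)
    (h : Disjoint ({a, c} : Finset α) {b, d}) : #(symmDiff {a, c} {b, d}) = 4 := by
  rw [h.symmDiff_eq_sup, sup_eq_union, card_union_of_disjoint h, card_pair hac, card_pair hbd]

end Combinatorics

theorem singleton_one_mem_T12 : ({1} : Finset ℕ) ∈ T12 := Or.inl (Or.inl (Or.inl rfl))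

theorem singleton_two_mem_T12 : ({2} : Finset ℕ) ∈ T12 := Or.inl (Or.inl (Or.inr rfl))

theorem pair_one_mem_T12 {n : ℕ} (hn : 3 ≤ n) : ({1, n} : Finset ℕ) ∈ T12 :=
  Or.inl (Or.inr ⟨n, hn, rfl⟩)

theorem pair_two_mem_T12 {m : ℕ} (hm : 3 ≤ m) : ({2, m} : Finset ℕ) ∈ T12 :=
  Or.inr ⟨m, hm, rfl⟩

theorem abs_sub_le_iSup_abs_sub {a b : ℕ → ℝ} {a₀ b₀ : ℝ} (ha : Tendsto a atTop (nhds a₀))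
    (hb : Tendsto b atTop (nhds b₀)) (k : ℕ) : |a k - b k| ≤ ⨆ n, |a n - b n| :=
  le_ciSup (ha.sub hb).abs.bddAbove_range k

theorem exists_lt_dist_lt_of_isBounded {X : Type*} [PseudoMetricSpace X] [ProperSpace X]
    {x : ℕ → X} (hx : Bornology.IsBounded (Set.range x)) {ε : ℝ} (hε : 0 < ε) :
    ∃ n m, n < m ∧ dist (x n) (x m) < ε := by
  obtain ⟨_, -, φ, hφ, hlim⟩ := tendsto_subseq_of_bounded hx (Set.mem_range_self ·)
  obtain ⟨K, hK⟩ := Metric.cauchySeq_iff.1 hlim.cauchySeq ε hε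
  exact ⟨φ K, φ (K + 1), hφ K.lt_succ_self, hK K le_rfl (K + 1) K.le_succ⟩

theorem exists_lt_forall_lt_abs_sub_lt {x : ℕ → ℕ → ℝ} {u : ℕ → ℝ} {C : ℝ}
    (hxu : ∀ n k, |x n k - u k| ≤ C) (N : ℕ) {ε : ℝ} (hε : 0 < ε) :
    ∃ n m, n < m ∧ ∀ k < N, |x n k - x m k| < ε := by
  let g : ℕ → Fin N → ℝ := fun n k => x n k
  have hC : 0 ≤ C := (abs_nonneg _).trans (hxu 0 0)
  have hg : Bornology.IsBounded (Set.range g) := by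
    refine (Metric.isBounded_iff_subset_closedBall fun k : Fin N => u k).2 ⟨C, ?_⟩
    rintro _ ⟨n, rfl⟩
    exact (dist_pi_le_iff hC).2 fun k => hxu n k
  obtain ⟨n, m, hnm, hdist⟩ := exists_lt_dist_lt_of_isBounded hg hε
  exact ⟨n, m, hnm, fun k hk => (dist_pi_lt_iff hε).1 hdist ⟨k, hk⟩⟩

theorem exists_ne_forall_abs_sub_le_two_mul_add {u v : ℕ → ℝ} {x y : ℕ → ℕ → ℝ} {C ε : ℝ}
    (hu : Tendsto u atTop (nhds 0)) (hv : Tendsto v atTop (nhds 0))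
    (hxu : ∀ n k, |x n k - u k| ≤ C) (hyv : ∀ m k, |y m k - v k| ≤ C)
    (hxy : ∀ m k, |x m k - y m k| ≤ 2 * C) (hε : 0 < ε) :
    ∃ n m, n ≠ m ∧ ∀ k, |x n k - y m k| ≤ 2 * C + ε := by
  have hε₀ : |(0 : ℝ)| < ε / 2 := by simpa using half_pos hε
  have hsmall : ∀ᶠ k in atTop, |u k| < ε / 2 ∧ |v k| < ε / 2 :=
    (hu.abs.eventually (gt_mem_nhds hε₀)).and (hv.abs.eventually (gt_mem_nhds hε₀))
  obtain ⟨N, hN⟩ := eventually_atTop.1 hsmall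
  obtain ⟨n, m, hnm, hclose⟩ := exists_lt_forall_lt_abs_sub_lt hxu N hε
  refine ⟨n, m, hnm.ne, fun k => ?_⟩
  rcases lt_or_ge k N with hk | hk
  · calc |x n k - y m k| ≤ |x n k - x m k| + |x m k - y m k| := abs_sub_le _ _ _
      _ ≤ 2 * C + ε := by linarith [hclose k hk, hxy m k]
  · have h₁ := abs_le.1 (hxu n k)
    have h₂ := abs_le.1 (hyv m k)
    have h₃ := abs_lt.1 (hN k hk).1
    have h₄ := abs_lt.1 (hN k hk).2
    exact abs_le.2 ⟨by linarith, by linarith⟩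

/-- Aharoni's lower bound: `T²_{1,2}(ℕ)` does not embed into `c₀` with distortion
strictly less than `2`. -/
theorem T12_no_embedding_distortion_lt_two :
    ¬ ∃ (C : ℝ), C < 2 ∧ ∃ f : Finset ℕ → (ℕ → ℝ),
      (∀ σ ∈ T12, Tendsto (f σ) atTop (nhds 0)) ∧
      (∀ σ ∈ T12, ∀ τ ∈ T12,
        ((symmDiff σ τ).card : ℝ) ≤ (⨆ n, |f σ n - f τ n|) ∧
        (⨆ n, |f σ n - f τ n|) ≤ C * ((symmDiff σ τ).card : ℝ)) := by
  rintro ⟨C, hC, f, hf0, hf⟩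
  have hcoord : ∀ σ ∈ T12, ∀ τ ∈ T12, ∀ k, |f σ k - f τ k| ≤ C * #(symmDiff σ τ) :=
    fun σ hσ τ hτ k => (abs_sub_le_iSup_abs_sub (hf0 σ hσ) (hf0 τ hτ) k).trans (hf σ hσ τ hτ).2
  have h1 := singleton_one_mem_T12
  have h2 := singleton_two_mem_T12
  have hx (n : ℕ) : {1, n + 3} ∈ T12 := pair_one_mem_T12 (by omega)
  have hy (m : ℕ) : {2, m + 3} ∈ T12 := pair_two_mem_T12 (by omega)
  obtain ⟨n, m, hnm, hclose⟩ := exists_ne_forall_abs_sub_le_two_mul_add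
    (x := fun n => f {1, n + 3}) (y := fun m => f {2, m + 3}) (hf0 _ h1) (hf0 _ h2)
    (fun n k => by simpa [card_symmDiff_pair_singleton] using hcoord _ (hx n) _ h1 k)
    (fun m k => by simpa [card_symmDiff_pair_singleton] using hcoord _ (hy m) _ h2 k)
    (fun m k => by
      simpa [card_symmDiff_pair_pair_right, mul_comm] using hcoord _ (hx m) _ (hy m) k)
    (sub_pos.2 hC)
  have hfar := (hf _ (hx n) _ (hy m)).1
  rw [card_symmDiff_pair_pair_of_disjoint (by omega) (by omega) (by simp; omega)] at hfar
  have := hfar.trans (ciSup_le hclose)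
  push_cast at this
  linarith
end

section
/- Let K be a compact space, k ≥ 2, and f : Δ_{≤k}(ℕ) → C(K) with f(∅) = 0 satisfying d(σ,τ) ≤ ‖f(σ)−f(τ)‖_∞ ≤ D·d(σ,τ) where D < k/(k−1). Fix k sequences (n_i^r)_{i≥1}, 1 ≤ r ≤ k, of mutually distinct natural numbers, and set η = 2k − 2(k−1)D > 0. Then for all indices i₁ ≠ j₁, ..., i_k ≠ j_k there exists β ∈ K such that |f({n_{i_r}^r})(β) − f({n_{j_r}^r})(β)| ≥ η for every 1 ≤ r ≤ k. -/
open Finset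

/-- CLAIM 1 in the proof of the main theorem: given an embedding `f` of `Δ_{≤k}(ℕ)`
into `C(K)` with `f(∅) = 0` and distortion `D < k/(k-1)`, and `k` sequences of
mutually distinct naturals, for all choices of indices `i₁ ≠ j₁, ..., i_k ≠ j_k`
there is a point `β ∈ K` where all the coordinatewise differences are at least
`η = 2k - 2(k-1)D`. -/
theorem claim1_common_witness_point
    {K : Type*} [TopologicalSpace K] [CompactSpace K] [Nonempty K]
    (k : ℕ) (hk : 2 ≤ k) (D : ℝ) (hD : D < k / (k - 1))
    (f : Finset ℕ → C(K, ℝ)) (hf0 : f ∅ = 0)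
    (hf : ∀ σ τ : Finset ℕ, σ.card ≤ k → τ.card ≤ k →
      ((symmDiff σ τ).card : ℝ) ≤ ‖f σ - f τ‖ ∧
      ‖f σ - f τ‖ ≤ D * ((symmDiff σ τ).card : ℝ))
    (n : Fin k → ℕ → ℕ)
    (hn : Function.Injective (fun p : Fin k × ℕ => n p.1 p.2)) :
    ∀ i j : Fin k → ℕ, (∀ r, i r ≠ j r) →
      ∃ β : K, ∀ r : Fin k,
        2 * k - 2 * (k - 1) * D ≤ |f {n r (i r)} β - f {n r (j r)} β| := by
  intro i j hij
  set σ : Finset ℕ := Finset.image (fun r => n r (i r)) Finset.univ with hσdef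
  set τ : Finset ℕ := Finset.image (fun r => n r (j r)) Finset.univ with hτdef
  have hiinj : Function.Injective (fun r : Fin k => n r (i r)) := by
    intro a b hab
    exact (Prod.ext_iff.mp (hn (a₁ := (a, i a)) (a₂ := (b, i b)) hab)).1
  have hjinj : Function.Injective (fun r : Fin k => n r (j r)) := by
    intro a b hab
    exact (Prod.ext_iff.mp (hn (a₁ := (a, j a)) (a₂ := (b, j b)) hab)).1
  have hσcard : σ.card = k := by
    rw [hσdef, Finset.card_image_of_injective _ hiinj, Finset.card_univ, Fintype.card_fin]
  have hτcard : τ.card = k := by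
    rw [hτdef, Finset.card_image_of_injective _ hjinj, Finset.card_univ, Fintype.card_fin]
  have hdisj : Disjoint σ τ := by
    rw [Finset.disjoint_left]
    rintro x hx hx'
    simp only [hσdef, hτdef, Finset.mem_image, Finset.mem_univ, true_and] at hx hx'
    obtain ⟨a, ha⟩ := hx
    obtain ⟨b, hb⟩ := hx'
    have h := hn (a₁ := (a, i a)) (a₂ := (b, j b)) (by simpa using ha.trans hb.symm)
    obtain ⟨h1, h2⟩ := Prod.ext_iff.mp h
    cases h1
    exact hij a h2
  have hsd : (symmDiff σ τ).card = 2 * k := by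
    rw [symmDiff_def]
    have h1 : σ \ τ = σ := Finset.sdiff_eq_self_iff_disjoint.mpr hdisj
    have h2 : τ \ σ = τ := Finset.sdiff_eq_self_iff_disjoint.mpr hdisj.symm
    simp only [Finset.sup_eq_union, h1, h2]
    rw [Finset.card_union_of_disjoint hdisj, hσcard, hτcard]
    ring
  have hmemσ : ∀ r : Fin k, n r (i r) ∈ σ := fun r =>
    Finset.mem_image_of_mem _ (Finset.mem_univ r)
  have hmemτ : ∀ r : Fin k, n r (j r) ∈ τ := fun r =>
    Finset.mem_image_of_mem _ (Finset.mem_univ r)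
  have hsdcard : ∀ (s : Finset ℕ) (x : ℕ), x ∈ s → s.card = k →
      (symmDiff s {x}).card = k - 1 := by
    intro s x hx hs
    rw [symmDiff_def]
    have h1 : ({x} : Finset ℕ) \ s = ∅ :=
      Finset.sdiff_eq_empty_iff_subset.mpr (Finset.singleton_subset_iff.mpr hx)
    simp only [Finset.sup_eq_union, h1, Finset.union_empty]
    rw [Finset.sdiff_singleton_eq_erase, Finset.card_erase_of_mem hx, hs]
  have hknz : ((k - 1 : ℕ) : ℝ) = (k : ℝ) - 1 := by
    push_cast [Nat.cast_sub (by omega : 1 ≤ k)]; ring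
  -- norm bounds
  have h2k : (2 * k : ℝ) ≤ ‖f σ - f τ‖ := by
    have := (hf σ τ (le_of_eq hσcard) (le_of_eq hτcard)).1
    rw [hsd] at this
    exact_mod_cast this
  have hDσ : ∀ r : Fin k, ‖f σ - f {n r (i r)}‖ ≤ D * ((k : ℝ) - 1) := by
    intro r
    have := (hf σ {n r (i r)} (le_of_eq hσcard) (by simp; omega)).2
    rwa [hsdcard σ _ (hmemσ r) hσcard, hknz] at this
  have hDτ : ∀ r : Fin k, ‖f τ - f {n r (j r)}‖ ≤ D * ((k : ℝ) - 1) := by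
    intro r
    have := (hf τ {n r (j r)} (le_of_eq hτcard) (by simp; omega)).2
    rwa [hsdcard τ _ (hmemτ r) hτcard, hknz] at this
  -- find the point attaining the norm
  obtain ⟨β, -, hβ⟩ := isCompact_univ.exists_isMaxOn Set.univ_nonempty
    (continuous_abs.comp (f σ - f τ).continuous).continuousOn
  have hnorm : ‖f σ - f τ‖ ≤ |(f σ - f τ) β| := by
    refine (ContinuousMap.norm_le _ (abs_nonneg _)).mpr fun x => ?_
    exact hβ (Set.mem_univ x)
  refine ⟨β, fun r => ?_⟩
  have hgβ : (2 * k : ℝ) ≤ |f σ β - f τ β| := by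
    have := h2k.trans hnorm
    simpa using this
  have ha : |f σ β - f {n r (i r)} β| ≤ D * ((k : ℝ) - 1) := by
    have := ((f σ - f {n r (i r)}).norm_coe_le_norm β).trans (hDσ r)
    simpa using this
  have hb : |f τ β - f {n r (j r)} β| ≤ D * ((k : ℝ) - 1) := by
    have := ((f τ - f {n r (j r)}).norm_coe_le_norm β).trans (hDτ r)
    simpa using this
  have tri : |f σ β - f τ β| ≤
      |f σ β - f {n r (i r)} β| + |f {n r (i r)} β - f {n r (j r)} β|
      + |f τ β - f {n r (j r)} β| := by
    have heq : f σ β - f τ β =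
        (f σ β - f {n r (i r)} β) + (f {n r (i r)} β - f {n r (j r)} β)
        - (f τ β - f {n r (j r)} β) := by ring
    calc |f σ β - f τ β| = _ := by rw [heq]
      _ ≤ |(f σ β - f {n r (i r)} β) + (f {n r (i r)} β - f {n r (j r)} β)|
          + |f τ β - f {n r (j r)} β| := abs_sub _ _
      _ ≤ _ := by gcongr; exact abs_add_le _ _
  nlinarith [hgβ, tri, ha, hb]
end

section
/- If the metric space Δ_ω(ℕ) of finite subsets of ℕ with the symmetric difference metric embeds almost isometrically into C(K) for a compact metric space K (i.e., for every ε > 0 there is a bi-Lipschitz embedding with distortion at most 1 + ε), then the ω-th Cantor–Bendixson derivative K^{(ω)} = ⋂_{k<ω} K^{(k)} is nonempty. -/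
/-!
Call `s ⊆ K` `θ`-norming for `f` if every `σ ≠ τ` has a point `y ∈ s` with
`θ |σ △ τ| ≤ |f σ y - f τ y|`; by the lower Lipschitz bound, `K` is `1`-norming. Let `s` be
`θ`-norming, `σ ≠ τ` at distance `m`, and adjoin pairwise disjoint blocks `B j` of size `m` outside
`σ ∪ τ`: `σ ∪ B v` and `τ ∪ B w` are at distance `3m` for `v ≠ w`, so some `y_{vw} ∈ s` has
`|f (σ ∪ B v) - f (τ ∪ B w)|(y_{vw}) ≥ 3θm`, and the triangle inequality through `σ` and `τ`
gives `|f σ - f τ|(y_{vw}) ≥ (3θ - 2 - 2ε)m`. If the `y_{vw}` took only finitely many values,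
pigeonhole would give `u < v < w` with `y_{uv} = y_{vw}` and differences of the same sign there;
adding them would push `|f (σ ∪ B u) - f (τ ∪ B w)|` above `3(1 + ε)m`. So the `y_{vw}`
accumulate, and the derived set of `s` is `(3θ - 2 - 2ε)`-norming. Iterating, the `k`-th derived
set of `K` is `(1 + ε - 3ᵏε)`-norming, hence nonempty when `3ᵏε < 1 + ε`.
-/

open Finset Function
open scoped symmDiff

theorem Set.Finite.exists_lt_lt_eq_of_forall_lt_mem {α β : Type*} [LinearOrder α] [Infinite α]
    {c : α → α → β} {S : Set β} (hS : S.Finite) (hc : ∀ a b, a < b → c a b ∈ S) :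
    ∃ a b d, a < b ∧ b < d ∧ c a b = c b d := by
  obtain ⟨a, b, hab, heq⟩ := hS.powerset.exists_lt_map_eq_of_forall_mem
    (f := fun a => {x | ∃ d, a < d ∧ c a d = x})
    fun a => by rintro _ ⟨d, had, rfl⟩; exact hc a d had
  obtain ⟨d, hbd, hcd⟩ : c a b ∈ {x | ∃ d, b < d ∧ c b d = x} := heq ▸ ⟨b, hab, rfl⟩
  exact ⟨a, b, d, hab, hbd, hcd.symm⟩

theorem abs_add_abs_sub_abs_le_of_nonneg_iff {G : Type*} [AddCommGroup G] [LinearOrder G]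
    [IsOrderedAddMonoid G] {x y z : G} (hxy : 0 ≤ x ↔ 0 ≤ y) : |x| + |y| - |z| ≤ |x + y - z| := by
  have hadd : |x + y| = |x| + |y| := by rw [abs_add_eq_add_abs_iff]; grind
  exact hadd ▸ abs_sub_abs_le_abs_sub _ _

section DerivedSet

variable {X : Type*} [TopologicalSpace X] [T1Space X] {s : Set X}

theorem IsClosed.iterate_derivedSet (hs : IsClosed s) (n : ℕ) : IsClosed (derivedSet^[n] s) := by
  cases n with
  | zero => exact hs
  | succ n => rw [iterate_succ_apply']; exact isClosed_derivedSet _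

theorem IsClosed.iterate_derivedSet_succ_subset (hs : IsClosed s) (n : ℕ) :
    derivedSet^[n + 1] s ⊆ derivedSet^[n] s := by
  rw [iterate_succ_apply']
  exact (isClosed_iff_derivedSet_subset _).1 (hs.iterate_derivedSet n)

end DerivedSet

namespace Finset

theorem symmDiff_union_union_of_disjoint {α : Type*} [DecidableEq α] {s t u v : Finset α}
    (h : Disjoint (s ∪ t) (u ∪ v)) : (s ∪ u) ∆ (t ∪ v) = s ∆ t ∪ u ∆ v := by
  ext a
  have : a ∈ s ∪ t → a ∉ u ∪ v := fun ha => disjoint_left.1 h ha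
  simp only [mem_symmDiff, mem_union] at this ⊢
  tauto

theorem card_symmDiff_union_union {α : Type*} [DecidableEq α] {s t u v : Finset α}
    (h : Disjoint (s ∪ t) (u ∪ v)) : #((s ∪ u) ∆ (t ∪ v)) = #(s ∆ t) + #(u ∆ v) := by
  rw [symmDiff_union_union_of_disjoint h, card_union_of_disjoint]
  exact h.mono (symmDiff_le_sup ..) (symmDiff_le_sup ..)

theorem exists_pairwise_disjoint_card_eq (s : Finset ℕ) (m : ℕ) :
    ∃ B : ℕ → Finset ℕ, (∀ j, #(B j) = m) ∧ (∀ j, Disjoint s (B j)) ∧ Pairwise (Disjoint on B) := by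
  obtain ⟨N, hN⟩ := exists_nat_subset_range s
  have hinj (j : ℕ) : Injective (N + Nat.pair j ·) := fun i i' h =>
    (Nat.pair_eq_pair.1 (Nat.add_left_cancel h)).2
  refine ⟨fun j => (range m).image (N + Nat.pair j ·), fun j => ?_, fun j => ?_,
    fun j j' hjj' => ?_⟩
  · rw [card_image_of_injective _ (hinj j), card_range]
  · refine disjoint_left.2 fun a ha hb => ?_
    obtain ⟨i, -, rfl⟩ := mem_image.1 hb
    exact absurd (mem_range.1 (hN ha)) (by omega)
  · refine disjoint_left.2 fun a ha hb => ?_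
    obtain ⟨i, -, rfl⟩ := mem_image.1 ha
    obtain ⟨i', -, h⟩ := mem_image.1 hb
    exact hjj' (Nat.pair_eq_pair.1 (Nat.add_left_cancel h)).1.symm

theorem exists_blocks_card_symmDiff (σ τ : Finset ℕ) :
    ∃ B : ℕ → Finset ℕ,
      (∀ v w, v ≠ w → #((σ ∪ B v) ∆ (τ ∪ B w)) = 3 * #(σ ∆ τ)) ∧
      (∀ w, #((σ ∪ B w) ∆ (τ ∪ B w)) = #(σ ∆ τ)) ∧
      (∀ v, #((σ ∪ B v) ∆ σ) = #(σ ∆ τ)) ∧ (∀ w, #((τ ∪ B w) ∆ τ) = #(σ ∆ τ)) := by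
  obtain ⟨B, hBcard, hBστ, hB⟩ := exists_pairwise_disjoint_card_eq (σ ∪ τ) #(σ ∆ τ)
  have hsymmDiff_empty (u : Finset ℕ) : u ∆ ∅ = u := symmDiff_bot u
  refine ⟨B, fun v w hvw => ?_, fun w => ?_, fun v => ?_, fun w => ?_⟩
  · rw [card_symmDiff_union_union (disjoint_union_right.2 ⟨hBστ v, hBστ w⟩),
      symmDiff_eq_union (hB hvw), card_union_of_disjoint (hB hvw), hBcard, hBcard]
    ring
  · simp [card_symmDiff_union_union (disjoint_union_right.2 ⟨hBστ w, hBστ w⟩)]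
  · simpa [hBcard, hsymmDiff_empty] using
      card_symmDiff_union_union (s := σ) (t := σ) (u := B v) (v := ∅)
        (by simpa using (hBστ v).mono_left subset_union_left)
  · simpa [hBcard, hsymmDiff_empty] using
      card_symmDiff_union_union (s := τ) (t := τ) (u := B w) (v := ∅)
        (by simpa using (hBστ w).mono_left subset_union_right)

end Finset

theorem infinite_setOf_witnesses {K : Type*} {g : Finset ℕ → K → ℝ} {ε θ : ℝ}
    {σ τ : Finset ℕ} {B : ℕ → Finset ℕ} {Y : ℕ → ℕ → K}
    (hg : ∀ σ τ y, |g σ y - g τ y| ≤ (1 + ε) * #(σ ∆ τ)) (hθ : 0 < 3 * θ - 2 - 2 * ε)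
    (hστ : σ ≠ τ) (hfar : ∀ v w, v ≠ w → #((σ ∪ B v) ∆ (τ ∪ B w)) = 3 * #(σ ∆ τ))
    (hnear : ∀ w, #((σ ∪ B w) ∆ (τ ∪ B w)) = #(σ ∆ τ))
    (hY : ∀ v w, v < w → θ * (3 * #(σ ∆ τ)) ≤ |g (σ ∪ B v) (Y v w) - g (τ ∪ B w) (Y v w)|) :
    {y | ∃ v w, v < w ∧ Y v w = y}.Infinite := by
  intro hfin
  obtain ⟨u, v, w, huv, hvw, hc⟩ :=
    (hfin.prod (Set.finite_univ (α := Prop))).exists_lt_lt_eq_of_forall_lt_mem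
      (c := fun v w => (Y v w, 0 ≤ g (σ ∪ B v) (Y v w) - g (τ ∪ B w) (Y v w)))
      fun v w hvw => ⟨⟨v, w, hvw, rfl⟩, trivial⟩
  simp only [Prod.mk.injEq, eq_iff_iff] at hc
  obtain ⟨hy, hsign⟩ := hc
  set y := Y v w
  rw [hy] at hsign
  have huv' := hy ▸ hY u v huv
  have hvw' := hY v w hvw
  have hvv := hnear v ▸ hg (σ ∪ B v) (τ ∪ B v) y
  have huw := hfar u w (huv.trans hvw).ne ▸ hg (σ ∪ B u) (τ ∪ B w) y
  -- same sign: the differences at `(u, v)` and `(v, w)` add up, and removing the short one at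
  -- `(v, v)` leaves the one at `(u, w)`
  have hsum := abs_add_abs_sub_abs_le_of_nonneg_iff (z := g (σ ∪ B v) y - g (τ ∪ B v) y) hsign
  rw [show ∀ a b c d : ℝ, a - b + (c - d) - (c - b) = a - d by intros; ring] at hsum
  have hm : (0 : ℝ) < #(σ ∆ τ) := Nat.cast_pos.2 (card_pos.2 (symmDiff_nonempty.2 hστ))
  push_cast at huw
  linarith [mul_pos hθ hm]

section NormsDifferences

variable {K : Type*} [TopologicalSpace K]

def NormsDifferences (f : Finset ℕ → C(K, ℝ)) (s : Set K) (θ : ℝ) : Prop :=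
  ∀ σ τ : Finset ℕ, σ ≠ τ → ∃ y ∈ s, θ * #(σ ∆ τ) ≤ |f σ y - f τ y|

variable [CompactSpace K] {f : Finset ℕ → C(K, ℝ)} {ε : ℝ}

theorem normsDifferences_univ (hf : ∀ σ τ, (#(σ ∆ τ) : ℝ) ≤ ‖f σ - f τ‖) :
    NormsDifferences f Set.univ 1 := by
  intro σ τ hστ
  by_contra! hlt
  have hpos : (0 : ℝ) < #(σ ∆ τ) := by simpa [card_pos]
  have := (ContinuousMap.norm_lt_iff (f σ - f τ) hpos).2 fun y => by
    simpa using hlt y (Set.mem_univ y)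
  linarith [hf σ τ]

theorem NormsDifferences.derivedSet {s : Set K} {θ : ℝ}
    (hf : ∀ σ τ y, |f σ y - f τ y| ≤ (1 + ε) * #(σ ∆ τ)) (hs : NormsDifferences f s θ)
    (hθ : 0 < 3 * θ - 2 - 2 * ε) : NormsDifferences f (derivedSet s) (3 * θ - 2 - 2 * ε) := by
  intro σ τ hστ
  set m := #(σ ∆ τ)
  have hm : 0 < m := card_pos.2 (symmDiff_nonempty.2 hστ)
  obtain ⟨B, hfar, hnear, hσ, hτ⟩ := exists_blocks_card_symmDiff σ τ
  have hwit (v w : ℕ) (hvw : v ≠ w) :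
      ∃ y ∈ s, θ * (3 * m) ≤ |f (σ ∪ B v) y - f (τ ∪ B w) y| := by
    obtain ⟨y, hy, h⟩ := hs (σ ∪ B v) (τ ∪ B w) fun h => by
      have := hfar v w hvw
      simp only [h, symmDiff_self, bot_eq_empty, card_empty] at this
      omega
    exact ⟨y, hy, by rwa [hfar v w hvw, Nat.cast_mul, Nat.cast_ofNat] at h⟩
  have : Nonempty K := ⟨(hwit 0 1 one_ne_zero.symm).choose⟩
  choose! Y hYs hY using hwit
  have hbound {v w} (hvw : v ≠ w) :
      (3 * θ - 2 - 2 * ε) * m ≤ |f σ (Y v w) - f τ (Y v w)| := by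
    have hσv := hσ v ▸ hf (σ ∪ B v) σ (Y v w)
    have hτw := hτ w ▸ hf (τ ∪ B w) τ (Y v w)
    have hvw' := hY v w hvw
    have htri := abs_sub_le (f (σ ∪ B v) (Y v w)) (f σ (Y v w)) (f (τ ∪ B w) (Y v w))
    have htri' := abs_sub_le (f σ (Y v w)) (f τ (Y v w)) (f (τ ∪ B w) (Y v w))
    rw [abs_sub_comm (f τ _)] at htri'
    linarith
  set T := {y | ∃ v w, v < w ∧ Y v w = y}
  have hT : T.Infinite := infinite_setOf_witnesses hf hθ hστ hfar hnear fun v w h => hY v w h.ne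
  obtain ⟨x, hx⟩ := hT.exists_accPt_principal
  refine ⟨x, derivedSet_mono _ _ (by rintro _ ⟨v, w, hvw, rfl⟩; exact hYs v w hvw.ne) hx, ?_⟩
  have hclosed : IsClosed {y | (3 * θ - 2 - 2 * ε) * m ≤ |f σ y - f τ y|} :=
    isClosed_le continuous_const (by fun_prop)
  exact hclosed.closure_subset_iff.2 (by rintro _ ⟨v, w, hvw, rfl⟩; exact hbound hvw.ne)
    (derivedSet_subset_closure T hx)

theorem normsDifferences_iterate_derivedSet (hε : 0 ≤ ε)
    (hlow : ∀ σ τ, (#(σ ∆ τ) : ℝ) ≤ ‖f σ - f τ‖) (hup : ∀ σ τ, ‖f σ - f τ‖ ≤ (1 + ε) * #(σ ∆ τ))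
    (k : ℕ) (hk : 3 ^ k * ε < 1 + ε) :
    NormsDifferences f (derivedSet^[k] Set.univ) (1 + ε - 3 ^ k * ε) := by
  have hpt (σ τ y) : |f σ y - f τ y| ≤ (1 + ε) * #(σ ∆ τ) :=
    (by simpa using (f σ - f τ).norm_coe_le_norm y : |f σ y - f τ y| ≤ _).trans (hup σ τ)
  induction k with
  | zero => simpa using normsDifferences_univ hlow
  | succ k ih =>
    have hk' : 3 ^ k * ε < 1 + ε := by
      rw [pow_succ] at hk
      linarith [mul_nonneg (pow_nonneg zero_le_three k) hε]
    rw [iterate_succ_apply']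
    convert (ih hk').derivedSet hpt (by rw [pow_succ] at hk; linarith) using 1
    ring

end NormsDifferences

/-- If `Δ_ω(ℕ)` (the finite subsets of `ℕ` with the symmetric difference metric)
embeds almost isometrically into `C(K)` for a compact metric space `K`, then the
`ω`-th Cantor–Bendixson derivative `K^{(ω)} = ⋂_{n<ω} K^{(n)}` is nonempty. -/
theorem deltaOmega_almost_isometric_implies_CB_omega_nonempty
    {K : Type*} [MetricSpace K] [CompactSpace K]
    (h : ∀ ε : ℝ, 0 < ε → ∃ f : Finset ℕ → C(K, ℝ),
      ∀ σ τ : Finset ℕ,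
        ((symmDiff σ τ).card : ℝ) ≤ ‖f σ - f τ‖ ∧
        ‖f σ - f τ‖ ≤ (1 + ε) * ((symmDiff σ τ).card : ℝ)) :
    (⋂ n : ℕ, derivedSet^[n] (Set.univ : Set K)).Nonempty := by
  have hne (n : ℕ) : (derivedSet^[n] (Set.univ : Set K)).Nonempty := by
    obtain ⟨f, hf⟩ := h (1 / 3 ^ n) (by positivity)
    have hn : (3 : ℝ) ^ n * (1 / 3 ^ n) < 1 + 1 / 3 ^ n := by
      rw [mul_one_div_cancel (by positivity)]
      simp
    obtain ⟨y, hy, -⟩ := normsDifferences_iterate_derivedSet (by positivity)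
      (fun σ τ => (hf σ τ).1) (fun σ τ => (hf σ τ).2) n hn ∅ {0} (by simp)
    exact ⟨y, hy⟩
  exact IsCompact.nonempty_iInter_of_sequence_nonempty_isCompact_isClosed _
    isClosed_univ.iterate_derivedSet_succ_subset hne isCompact_univ isClosed_univ.iterate_derivedSet
end

section
/- Let K be compact metric and suppose g : c₀₀ → C(K) satisfies (1+ε')^{-1}‖x−y‖₁ ≤ ‖g(x)−g(y)‖_∞ ≤ ‖x−y‖₁ for all finitely supported sequences x, y. Then for any x, y ∈ c₀₀ with disjoint supports and ‖x−y‖₁ = δ > 0, there exists β₀ ∈ K' (an accumulation point of K) with |g(x)(β₀) − g(y)(β₀)| ≥ (1 − 2ε')δ/(1 + ε'). -/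
open Finsupp

/-- The `ℓ¹` norm of a finitely supported sequence. -/
noncomputable def ell1Norm (z : ℕ →₀ ℝ) : ℝ := ∑ n ∈ z.support, |z n|

lemma ell1Norm_neg (z : ℕ →₀ ℝ) : ell1Norm (-z) = ell1Norm z := by
  unfold ell1Norm
  rw [Finsupp.support_neg]
  exact Finset.sum_congr rfl (fun n _ => by simp)

lemma ell1Norm_add_of_disjoint (z w : ℕ →₀ ℝ) (h : Disjoint z.support w.support) :
    ell1Norm (z + w) = ell1Norm z + ell1Norm w := by
  unfold ell1Norm
  rw [Finsupp.support_add_eq h, Finset.sum_union h]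
  congr 1
  · exact Finset.sum_congr rfl (fun n hn => by
      rw [Finsupp.add_apply, Finsupp.notMem_support_iff.mp (Finset.disjoint_left.mp h hn),
        add_zero])
  · exact Finset.sum_congr rfl (fun n hn => by
      rw [Finsupp.add_apply, Finsupp.notMem_support_iff.mp (Finset.disjoint_right.mp h hn),
        zero_add])

lemma ell1Norm_single (n : ℕ) (a : ℝ) : ell1Norm (Finsupp.single n a) = |a| := by
  unfold ell1Norm
  rcases eq_or_ne a 0 with rfl | ha
  · simp
  · rw [Finsupp.support_single_ne_zero _ ha, Finset.sum_singleton, Finsupp.single_eq_same]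

lemma finite_of_no_accPt {K : Type*} [TopologicalSpace K] [CompactSpace K]
    (S : Set K) (hS : IsClosed S)
    (h : ∀ β ∈ S, β ∉ derivedSet (Set.univ : Set K)) : S.Finite := by
  have hopen : ∀ β ∈ S, IsOpen ({β} : Set K) := by
    intro β hβ
    have hacc : ¬ AccPt β (Filter.principal (Set.univ : Set K)) := h β hβ
    rw [accPt_iff_nhds] at hacc
    push_neg at hacc
    obtain ⟨U, hU, hU2⟩ := hacc
    have hsub : U ⊆ {β} := by
      intro z hz
      simpa using hU2 z ⟨hz, trivial⟩
    obtain ⟨V, hVU, hVopen, hβV⟩ := mem_nhds_iff.mp hU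
    have : V = {β} := le_antisymm (hVU.trans hsub) (by simpa using hβV)
    exact this ▸ hVopen
  have hcomp : IsCompact S := hS.isCompact
  obtain ⟨t, ht⟩ := hcomp.elim_finite_subcover (fun β : S => ({(β : K)} : Set K))
    (fun β => hopen β β.2) (fun β hβ => Set.mem_iUnion.mpr ⟨⟨β, hβ⟩, rfl⟩)
  apply Set.Finite.subset (Set.Finite.biUnion t.finite_toSet (fun β _ => Set.finite_singleton (β : K)))
  simpa using ht

lemma norm_attain_ge {K : Type*} [MetricSpace K] [CompactSpace K] [Nonempty K]
    (f : C(K, ℝ)) (t : ℝ) (h : t ≤ ‖f‖) : ∃ β : K, t ≤ |f β| := by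
  have hc : ContinuousOn (fun β : K => |f β|) Set.univ := f.continuous.abs.continuousOn
  obtain ⟨β, -, hβ⟩ := isCompact_univ.exists_isMaxOn Set.univ_nonempty hc
  refine ⟨β, le_trans h ?_⟩
  exact (ContinuousMap.norm_le f (abs_nonneg _)).mpr (fun x => by
    simpa [Real.norm_eq_abs] using hβ (Set.mem_univ x))

lemma core_contradiction {K : Type*} [MetricSpace K] [CompactSpace K]
    (g : (ℕ →₀ ℝ) → C(K, ℝ)) (p q : ℕ → (ℕ →₀ ℝ)) (s t C : ℝ) (hst : s < t)
    (S : Set K) (hfin : S.Finite)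
    (hdiag : ∀ i (β : K), |g (p i) β - g (q i) β| ≤ s)
    (hoff : ∀ i j : ℕ, i ≠ j → ∃ β ∈ S, t ≤ |g (p i) β - g (q j) β|)
    (hbdd : ∀ i (β : K), |g (q i) β - g (q 0) β| ≤ C) : False := by
  set r : ℝ := (t - s) / 2 with hr_def
  have hr : 0 < r := by simp only [hr_def]; linarith
  classical
  let F : Finset K := hfin.toFinset
  let φ : ℕ → (F → ℤ) := fun i β => ⌊g (q i) β / r⌋
  -- the range of φ is finite
  have hmaps : Set.MapsTo φ (Set.univ : Set ℕ)
      (Set.pi Set.univ (fun β : F => Set.Icc ⌊(g (q 0) β - C) / r⌋ ⌊(g (q 0) β + C) / r⌋)) := by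
    intro i _
    intro β _
    have hb := hbdd i β
    have hb' := abs_le.mp hb
    constructor
    · exact Int.floor_mono (div_le_div_of_nonneg_right (by linarith [hb'.2]) hr.le)
    · exact Int.floor_mono (div_le_div_of_nonneg_right (by linarith [hb'.1]) hr.le)
  have hTfin : (Set.pi Set.univ
      (fun β : F => Set.Icc ⌊(g (q 0) β - C) / r⌋ ⌊(g (q 0) β + C) / r⌋)).Finite :=
    Set.Finite.pi (fun β => Set.finite_Icc _ _)
  obtain ⟨i, -, j, -, hij, hφ⟩ := Set.infinite_univ.exists_ne_map_eq_of_mapsTo hmaps hTfin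
  obtain ⟨β, hβS, hβ⟩ := hoff i j hij
  have hβF : β ∈ F := hfin.mem_toFinset.mpr hβS
  have hfloor : ⌊g (q i) β / r⌋ = ⌊g (q j) β / r⌋ := congrFun hφ ⟨β, hβF⟩
  have hqq : |g (q i) β - g (q j) β| < r := by
    have h1 := Int.floor_le (g (q i) β / r)
    have h2 := Int.lt_floor_add_one (g (q i) β / r)
    have h3 := Int.floor_le (g (q j) β / r)
    have h4 := Int.lt_floor_add_one (g (q j) β / r)
    rw [hfloor] at h1 h2
    have hd : |g (q i) β / r - g (q j) β / r| < 1 := by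
      rw [abs_lt]; constructor <;> push_cast <;> [linarith; linarith]
    have huv : g (q i) β - g (q j) β = (g (q i) β / r - g (q j) β / r) * r := by
      field_simp
    calc |g (q i) β - g (q j) β| = |g (q i) β / r - g (q j) β / r| * r := by
          rw [huv, abs_mul, abs_of_pos hr]
      _ < 1 * r := mul_lt_mul_of_pos_right hd hr
      _ = r := one_mul r
  have := hdiag i β
  have : t ≤ |g (p i) β - g (q j) β| := hβ
  have htri : |g (p i) β - g (q j) β| ≤ |g (p i) β - g (q i) β| + |g (q i) β - g (q j) β| := by
    have := abs_sub_le (g (p i) β) (g (q i) β) (g (q j) β)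
    linarith [abs_sub_le (g (p i) β) (g (q i) β) (g (q j) β)]
  have : t ≤ s + r := by linarith [hdiag i β]
  simp only [hr_def] at this
  linarith

lemma ell1Norm_zero : ell1Norm 0 = 0 := by simp [ell1Norm]


/-- If `g : c₀₀ → C(K)` satisfies `(1+ε')⁻¹‖x-y‖₁ ≤ ‖g x - g y‖_∞ ≤ ‖x-y‖₁`, then for
any finitely supported `x, y` with disjoint supports and `‖x-y‖₁ = δ > 0` there is an
accumulation point `β₀ ∈ K'` with `|g x β₀ - g y β₀| ≥ (1-2ε')δ/(1+ε')`. -/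
theorem witness_in_derived_set_for_disjointly_supported
    {K : Type*} [MetricSpace K] [CompactSpace K]
    (ε' : ℝ) (hε' : 0 < ε')
    (g : (ℕ →₀ ℝ) → C(K, ℝ))
    (hg : ∀ x y : ℕ →₀ ℝ,
      (1 + ε')⁻¹ * ell1Norm (x - y) ≤ ‖g x - g y‖ ∧ ‖g x - g y‖ ≤ ell1Norm (x - y))
    (x y : ℕ →₀ ℝ) (hxy : Disjoint x.support y.support)
    (δ : ℝ) (hδ : 0 < δ) (hδeq : ell1Norm (x - y) = δ) :
    ∃ β₀ ∈ derivedSet (Set.univ : Set K),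
      (1 - 2 * ε') * δ / (1 + ε') ≤ |g x β₀ - g y β₀| := by
  have hε1 : (0:ℝ) < 1 + ε' := by linarith
  -- pointwise bound
  have hpt : ∀ a b : ℕ →₀ ℝ, ∀ β : K, |g a β - g b β| ≤ ell1Norm (a - b) := by
    intro a b β
    have h1 : (g a - g b) β = g a β - g b β := rfl
    calc |g a β - g b β| = ‖(g a - g b) β‖ := by rw [h1, Real.norm_eq_abs]
      _ ≤ ‖g a - g b‖ := ContinuousMap.norm_coe_le_norm _ β
      _ ≤ _ := (hg a b).2
  -- K is nonempty
  haveI hK : Nonempty K := by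
    by_contra hempty
    rw [not_nonempty_iff] at hempty
    have h0 : g x - g y = 0 := by ext a; exact hempty.elim a
    have h1 := (hg x y).1
    rw [h0, norm_zero, hδeq] at h1
    nlinarith [inv_pos.mpr hε1]
  by_contra hcon
  push_neg at hcon
  rcases lt_or_ge ε' 2 with hε2 | hε2
  · -- main case : ε' < 2
    classical
    set c : ℝ := (1 - 2 * ε') * δ / (1 + ε') with hc_def
    set N : Finset ℕ := x.support ∪ y.support with hN_def
    set k : ℕ → ℕ := fun i => N.sup id + 1 + i with hk_def
    have hkN : ∀ i, k i ∉ N := by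
      intro i hmem
      have h1 : id (k i) ≤ N.sup id := Finset.le_sup hmem
      simp only [hk_def, id] at h1
      omega
    have hkinj : ∀ i j : ℕ, i ≠ j → k i ≠ k j := by
      intro i j hij
      simp only [hk_def]
      omega
    set e : ℕ → (ℕ →₀ ℝ) := fun i => Finsupp.single (k i) δ with he_def
    have hex : ∀ i, ell1Norm (e i) = δ := by
      intro i; rw [he_def, ell1Norm_single]; exact abs_of_pos hδ
    have hsupp_e : ∀ i, (e i).support ⊆ {k i} := fun i => Finsupp.support_single_subset
    set p : ℕ → (ℕ →₀ ℝ) := fun i => x + e i with hp_def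
    set q : ℕ → (ℕ →₀ ℝ) := fun i => y + e i with hq_def
    set t : ℝ := (1 + ε')⁻¹ * (3 * δ) with ht_def
    -- ℓ¹ computation for distinct pairs
    have hoffnorm : ∀ i j : ℕ, i ≠ j → ell1Norm (p i - q j) = 3 * δ := by
      intro i j hij
      have h1 : p i - q j = (x - y) + (e i + -(e j)) := by
        simp only [hp_def, hq_def]; abel
      have d1 : Disjoint (e i).support (-(e j)).support := by
        refine Disjoint.mono (hsupp_e i) ?_ (Finset.disjoint_singleton.mpr (hkinj i j hij))
        rw [Finsupp.support_neg]; exact hsupp_e j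
      have d2 : Disjoint (x - y).support (e i + -(e j)).support := by
        refine Disjoint.mono ?_ ?_ (show Disjoint N ({k i} ∪ {k j} : Finset ℕ) from ?_)
        · exact (Finsupp.support_sub).trans (le_of_eq hN_def.symm)
        · refine (Finsupp.support_add).trans ?_
          apply Finset.union_subset_union (hsupp_e i)
          rw [Finsupp.support_neg]; exact hsupp_e j
        · rw [Finset.disjoint_union_right]
          constructor <;> rw [Finset.disjoint_singleton_right] <;> exact hkN _
      rw [h1, ell1Norm_add_of_disjoint _ _ d2, ell1Norm_add_of_disjoint _ _ d1,
        ell1Norm_neg, hδeq, hex, hex]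
      ring
    -- the witnessing set
    set S : Set K := {β | c ≤ |g x β - g y β|} with hS_def
    have hScl : IsClosed S :=
      isClosed_le continuous_const (((g x).continuous.sub (g y).continuous).abs)
    have hfin : S.Finite := by
      refine finite_of_no_accPt S hScl ?_
      intro β hβS hβD
      exact absurd hβS (not_le.mpr (hcon β hβD))
    refine core_contradiction g p q δ t (2 * δ) ?_ S hfin ?_ ?_ ?_
    · rw [ht_def, inv_mul_eq_div, lt_div_iff₀ hε1]; nlinarith
    · intro i β
      have h1 : p i - q i = x - y := by simp only [hp_def, hq_def]; abel
      calc |g (p i) β - g (q i) β| ≤ ell1Norm (p i - q i) := hpt _ _ β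
        _ = δ := by rw [h1, hδeq]
    · intro i j hij
      have h1 : t ≤ ‖g (p i) - g (q j)‖ := by
        have := (hg (p i) (q j)).1
        rw [hoffnorm i j hij] at this
        exact this
      obtain ⟨β, hβ⟩ := norm_attain_ge (g (p i) - g (q j)) t h1
      have hβ' : t ≤ |g (p i) β - g (q j) β| := hβ
      refine ⟨β, ?_, hβ'⟩
      -- membership in S
      have hpx : |g (p i) β - g x β| ≤ δ := by
        have h2 : p i - x = e i := by simp only [hp_def]; abel
        calc |g (p i) β - g x β| ≤ ell1Norm (p i - x) := hpt _ _ β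
          _ = δ := by rw [h2, hex]
      have hqy : |g (q j) β - g y β| ≤ δ := by
        have h2 : q j - y = e j := by simp only [hq_def]; abel
        calc |g (q j) β - g y β| ≤ ell1Norm (q j - y) := hpt _ _ β
          _ = δ := by rw [h2, hex]
      have htri : |g (p i) β - g (q j) β| ≤
          |g (p i) β - g x β| + |g x β - g y β| + |g y β - g (q j) β| := by
        have a1 := abs_sub_le (g (p i) β) (g x β) (g (q j) β)
        have a2 := abs_sub_le (g x β) (g y β) (g (q j) β)
        linarith
      have hyq : |g y β - g (q j) β| = |g (q j) β - g y β| := abs_sub_comm _ _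
      have hct : c = t - 2 * δ := by
        rw [hc_def, ht_def]; field_simp; ring
      rw [hS_def]; simp only [Set.mem_setOf_eq]
      linarith
    · intro i β
      rcases eq_or_ne i 0 with rfl | hi0
      · simp only [sub_self, abs_zero]; linarith
      · have h1 : q i - q 0 = e i + -(e 0) := by simp only [hq_def]; abel
        have d1 : Disjoint (e i).support (-(e 0)).support := by
          refine Disjoint.mono (hsupp_e i) ?_ (Finset.disjoint_singleton.mpr (hkinj i 0 hi0))
          rw [Finsupp.support_neg]; exact hsupp_e 0
        calc |g (q i) β - g (q 0) β| ≤ ell1Norm (q i - q 0) := hpt _ _ β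
          _ = 2 * δ := by
              rw [h1, ell1Norm_add_of_disjoint _ _ d1, ell1Norm_neg, hex, hex]; ring
  · -- case ε' ≥ 2 : the bound is negative, only need a point of the derived set
    have hcneg : (1 - 2 * ε') * δ / (1 + ε') < 0 := by
      apply div_neg_of_neg_of_pos ?_ hε1
      nlinarith
    have hD : ∀ β : K, β ∉ derivedSet (Set.univ : Set K) := by
      intro β hβD
      have h1 := hcon β hβD
      have h2 := abs_nonneg (g x β - g y β)
      linarith
    have hfin : (Set.univ : Set K).Finite :=
      finite_of_no_accPt _ isClosed_univ (fun β _ => hD β)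
    classical
    set c' : ℝ := (1 + ε')⁻¹ with hc'_def
    have hc' : 0 < c' := inv_pos.mpr hε1
    have hc'1 : c' * (1 + ε') = 1 := inv_mul_cancel₀ (ne_of_gt hε1)
    set p : ℕ → (ℕ →₀ ℝ) := fun i => Finsupp.single i 1 with hp_def
    set q : ℕ → (ℕ →₀ ℝ) := fun i => Finsupp.single i (1 + c') with hq_def
    set t : ℝ := (1 + ε')⁻¹ * (2 + c') with ht_def
    refine core_contradiction g p q c' t (2 * (1 + c')) ?_ Set.univ hfin ?_ ?_ ?_
    · rw [ht_def, inv_mul_eq_div, lt_div_iff₀ hε1]; nlinarith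
    · intro i β
      have h1 : p i - q i = Finsupp.single i (1 - (1 + c')) := by
        simp only [hp_def, hq_def]; exact (Finsupp.single_sub _ _ _).symm
      calc |g (p i) β - g (q i) β| ≤ ell1Norm (p i - q i) := hpt _ _ β
        _ = c' := by
            rw [h1, ell1Norm_single]
            rw [show (1 : ℝ) - (1 + c') = -c' by ring, abs_neg, abs_of_pos hc']
    · intro i j hij
      have d1 : Disjoint (p i).support (-(q j)).support := by
        refine Disjoint.mono Finsupp.support_single_subset ?_
          (Finset.disjoint_singleton.mpr hij)
        rw [Finsupp.support_neg]; exact Finsupp.support_single_subset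
      have hnorm : ell1Norm (p i - q j) = 2 + c' := by
        rw [sub_eq_add_neg, ell1Norm_add_of_disjoint _ _ d1, ell1Norm_neg, hp_def, hq_def,
          ell1Norm_single, ell1Norm_single, abs_one, abs_of_pos (by linarith : (0:ℝ) < 1 + c')]
        ring
      have h1 : t ≤ ‖g (p i) - g (q j)‖ := by
        have := (hg (p i) (q j)).1
        rw [hnorm] at this
        exact this
      obtain ⟨β, hβ⟩ := norm_attain_ge (g (p i) - g (q j)) t h1
      exact ⟨β, trivial, hβ⟩
    · intro i β
      rcases eq_or_ne i 0 with rfl | hi0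
      · simp only [sub_self, abs_zero]; positivity
      · have d1 : Disjoint (q i).support (-(q 0)).support := by
          refine Disjoint.mono Finsupp.support_single_subset ?_
            (Finset.disjoint_singleton.mpr hi0)
          rw [Finsupp.support_neg]; exact Finsupp.support_single_subset
        calc |g (q i) β - g (q 0) β| ≤ ell1Norm (q i - q 0) := hpt _ _ β
          _ = 2 * (1 + c') := by
              rw [sub_eq_add_neg, ell1Norm_add_of_disjoint _ _ d1, ell1Norm_neg, hq_def,
                ell1Norm_single, ell1Norm_single, abs_of_pos (by linarith : (0:ℝ) < 1 + c')]
              ring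
end
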